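/- arXiv:1502.03239 — 2 statements merged into one kernel-verified Lean document; each statement's English description precedes it below -/
import Mathlib

section
/- Let N and H be complex Hilbert spaces and let U = [[D, C], [C*, A]] be a selfadjoint contraction on N ⊕ H, where D : N → N, C : H → N, A : H → H. For x ∈ (−1, 1) set Θ(x) = D + x·C (I − xA)^{-1} C*. Then for every f ∈ N: the real number ⟨Θ(x)f, f⟩ converges as x → −1 from the right to (inf over h ∈ H of ⟨(I + U)(f ⊕ h), f ⊕ h⟩) − ‖f‖², and converges as x → 1 from the left to ‖f‖² − (inf over h ∈ H of ⟨(I − U)(f ⊕ h), f ⊕ h⟩). (That is, the strong limits Θ(∓1) exist and satisfy Θ(−1) = (I + U)_N↾N − I and Θ(1) = I − (I − U)_N↾N, where (·)_N denotes the Kreĭn shorted operator to N.) -/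
open ContinuousLinearMap Complex Filter
open scoped InnerProductSpace Topology

set_option synthInstance.maxHeartbeats 1000000
set_option maxHeartbeats 1000000

noncomputable section

variable {E F : Type*} [NormedAddCommGroup E] [InnerProductSpace ℂ E]
  [NormedAddCommGroup F] [InnerProductSpace ℂ F]

/-- The 2×2 block operator `[[A, B], [C, D]]` on the Hilbert space orthogonal direct sum
`E ⊕ F` (realized as `WithLp 2 (E × F)`), acting by `(e, f) ↦ (A e + B f, C e + D f)`. -/
def blk (A : E →L[ℂ] E) (B : F →L[ℂ] E) (C : E →L[ℂ] F) (D : F →L[ℂ] F) :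
    WithLp 2 (E × F) →L[ℂ] WithLp 2 (E × F) :=
  ((WithLp.prodContinuousLinearEquiv 2 ℂ E F).symm : E × F →L[ℂ] WithLp 2 (E × F)) ∘L
    ((A.coprod B).prod (C.coprod D)) ∘L
    ((WithLp.prodContinuousLinearEquiv 2 ℂ E F) : WithLp 2 (E × F) →L[ℂ] E × F)

/-- The isometric embedding of the first summand `E` into `E ⊕ F`. -/
def inl2 : E →L[ℂ] WithLp 2 (E × F) :=
  ((WithLp.prodContinuousLinearEquiv 2 ℂ E F).symm : E × F →L[ℂ] WithLp 2 (E × F)) ∘L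
    .inl ℂ E F

/-- The isometric embedding of the second summand `F` into `E ⊕ F`. -/
def inr2 : F →L[ℂ] WithLp 2 (E × F) :=
  ((WithLp.prodContinuousLinearEquiv 2 ℂ E F).symm : E × F →L[ℂ] WithLp 2 (E × F)) ∘L
    .inr ℂ E F

/-- The orthogonal projection of `E ⊕ F` onto the first summand `E`. -/
def fst2 : WithLp 2 (E × F) →L[ℂ] E :=
  .fst ℂ E F ∘L ((WithLp.prodContinuousLinearEquiv 2 ℂ E F) : WithLp 2 (E × F) →L[ℂ] E × F)

/-- The orthogonal projection of `E ⊕ F` onto the second summand `F`. -/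
def snd2 : WithLp 2 (E × F) →L[ℂ] F :=
  .snd ℂ E F ∘L ((WithLp.prodContinuousLinearEquiv 2 ℂ E F) : WithLp 2 (E × F) →L[ℂ] E × F)

/-- The element `(e, f)` of the orthogonal direct sum `E ⊕ F`. -/
def mk2 (e : E) (f : F) : WithLp 2 (E × F) :=
  (WithLp.prodContinuousLinearEquiv 2 ℂ E F).symm (e, f)

/-! With `g = C* f` and `ε = -(1 + x) / x`, completing the square in `h` shows that for
`-1 < x < 0` one has `⟪Θ(x) f, f⟫ + ‖f‖² = inf_h (⟪(I + U)(f ⊕ h), f ⊕ h⟫ + ε ‖h‖²)`, the infimum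
being attained at `h = x (I - x A)⁻¹ g`. As `x → -1⁺` we have `ε → 0⁺`, and such penalized infima
of a function bounded below converge to its infimum. The limit at `1⁻` follows by applying this to
the selfadjoint contraction `-U`, whose transfer function is `x ↦ -Θ(-x)`. -/

theorem tendsto_ciInf_add_mul_nhdsGT {ι : Sort*} [Nonempty ι] {q w : ι → ℝ}
    (hq : BddBelow (Set.range q)) (hw : ∀ i, 0 ≤ w i) :
    Tendsto (fun ε : ℝ => ⨅ i, (q i + ε * w i)) (𝓝[>] 0) (𝓝 (⨅ i, q i)) := by
  have hle : ∀ ε, 0 ≤ ε → ∀ i, q i ≤ q i + ε * w i := fun ε hε i =>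
    le_add_of_nonneg_right (mul_nonneg hε (hw i))
  refine tendsto_order.2 ⟨fun a ha => ?_, fun a ha => ?_⟩
  · filter_upwards [self_mem_nhdsWithin] with ε (hε : 0 < ε)
    exact ha.trans_le (le_ciInf fun i => (ciInf_le hq i).trans (hle ε hε.le i))
  · obtain ⟨i, hi⟩ := exists_lt_of_ciInf_lt ha
    have hcont : Tendsto (fun ε : ℝ => q i + ε * w i) (𝓝[>] 0) (𝓝 (q i)) := by
      have : Continuous fun ε : ℝ => q i + ε * w i := by fun_prop
      simpa using (this.tendsto 0).mono_left nhdsWithin_le_nhds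
    filter_upwards [hcont.eventually (gt_mem_nhds hi), self_mem_nhdsWithin]
      with ε hεi (hε : 0 < ε)
    obtain ⟨b, hb⟩ := hq
    have hbdd : BddBelow (Set.range fun j => q j + ε * w j) :=
      ⟨b, Set.forall_mem_range.2 fun j => (hb ⟨j, rfl⟩).trans (hle ε hε.le j)⟩
    exact (ciInf_le hbdd i).trans_lt hεi

section Quadratic

variable {𝕜 V : Type*} [RCLike 𝕜] [NormedAddCommGroup V] [InnerProductSpace 𝕜 V]

open RCLike in
theorem ContinuousLinearMap.IsPositive.re_inner_le_of_apply_eq_neg {S : V →L[𝕜] V}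
    (hS : S.IsPositive) {g h₀ : V} (hh₀ : S h₀ = -g) (h : V) :
    re ⟪g, h₀⟫_𝕜 ≤ re ⟪S h, h⟫_𝕜 + 2 * re ⟪g, h⟫_𝕜 := by
  have hsq : re ⟪S (h - h₀), h - h₀⟫_𝕜 = re ⟪S h, h⟫_𝕜 + 2 * re ⟪g, h⟫_𝕜 - re ⟪g, h₀⟫_𝕜 := by
    have h₁ : ⟪S h, h₀⟫_𝕜 = -⟪h, g⟫_𝕜 := by
      rw [hS.inner_left_eq_inner_right, hh₀, inner_neg_right]
    have h₂ : re ⟪h, g⟫_𝕜 = re ⟪g, h⟫_𝕜 := by rw [← inner_conj_symm, RCLike.conj_re]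
    simp only [map_sub, inner_sub_left, inner_sub_right, hh₀, inner_neg_left, h₁, map_neg, h₂]
    ring
  linarith [hS.re_inner_nonneg_left (h - h₀)]

theorem ContinuousLinearMap.isPositive_one_add_of_norm_le_one {T : V →L[𝕜] V}
    (hT : (T : V →ₗ[𝕜] V).IsSymmetric) (hT₁ : ‖T‖ ≤ 1) : (1 + T).IsPositive := by
  refine ⟨fun x y => by simpa [inner_add_left, inner_add_right] using hT x y, fun x => ?_⟩
  have hTx : |RCLike.re ⟪T x, x⟫_𝕜| ≤ ‖x‖ ^ 2 :=
    calc |RCLike.re ⟪T x, x⟫_𝕜| ≤ ‖T x‖ * ‖x‖ :=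
          (RCLike.abs_re_le_norm _).trans (norm_inner_le_norm _ _)
      _ ≤ ‖x‖ * ‖x‖ := by gcongr; exact T.le_of_opNorm_le hT₁ x |>.trans_eq (one_mul _)
      _ = ‖x‖ ^ 2 := (sq _).symm
  simp only [reApplyInnerSelf, add_apply, one_apply_eq_self, inner_add_left, map_add,
    inner_self_eq_norm_sq]
  linarith [abs_le.1 hTx]

end Quadratic

section Block

theorem re_inner_self_eq_norm_sq (e : E) : (⟪e, e⟫_ℂ).re = ‖e‖ ^ 2 :=
  inner_self_eq_norm_sq (𝕜 := ℂ) e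

@[simp]
theorem blk_mk2 (A : E →L[ℂ] E) (B : F →L[ℂ] E) (C : E →L[ℂ] F) (D : F →L[ℂ] F) (e : E) (f : F) :
    blk A B C D (mk2 e f) = mk2 (A e + B f) (C e + D f) := rfl

theorem inner_mk2 (e e' : E) (f f' : F) : ⟪mk2 e f, mk2 e' f'⟫_ℂ = ⟪e, e'⟫_ℂ + ⟪f, f'⟫_ℂ := rfl

theorem norm_mk2_sq (e : E) (f : F) : ‖mk2 e f‖ ^ 2 = ‖e‖ ^ 2 + ‖f‖ ^ 2 := by
  simp only [← inner_self_eq_norm_sq (𝕜 := ℂ), inner_mk2, map_add]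

theorem blk_neg (A : E →L[ℂ] E) (B : F →L[ℂ] E) (C : E →L[ℂ] F) (D : F →L[ℂ] F) :
    blk (-A) (-B) (-C) (-D) = -blk A B C D := by
  ext v; simp [blk, ← WithLp.toLp_neg, add_comm]

theorem norm_le_norm_blk (A : E →L[ℂ] E) (B : F →L[ℂ] E) (C : E →L[ℂ] F) (D : F →L[ℂ] F) :
    ‖D‖ ≤ ‖blk A B C D‖ := by
  refine opNorm_le_bound _ (norm_nonneg (blk A B C D)) fun f => ?_
  have hmk : ‖mk2 (0 : E) f‖ = ‖f‖ := by
    rw [← sq_eq_sq₀ (norm_nonneg _) (norm_nonneg _), norm_mk2_sq, norm_zero]; ring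
  calc ‖D f‖ ≤ ‖mk2 (B f) (D f)‖ := by
        rw [← sq_le_sq₀ (norm_nonneg _) (norm_nonneg _), norm_mk2_sq]
        exact le_add_of_nonneg_left (sq_nonneg _)
    _ = ‖blk A B C D (mk2 0 f)‖ := by simp
    _ ≤ ‖blk A B C D‖ * ‖f‖ := hmk ▸ le_opNorm _ _

theorem isSymmetric_of_isSelfAdjoint_blk [CompleteSpace E] [CompleteSpace F]
    {A : E →L[ℂ] E} {B : F →L[ℂ] E} {C : E →L[ℂ] F} {D : F →L[ℂ] F}
    (hU : IsSelfAdjoint (blk A B C D)) : (D : F →ₗ[ℂ] F).IsSymmetric := fun f f' => by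
  have := hU.isSymmetric (mk2 0 f) (mk2 0 f')
  simpa only [coe_coe, blk_mk2, inner_mk2, map_zero, zero_add, inner_zero_left,
    inner_zero_right] using this

theorem re_inner_blk_adjoint_mk2 [CompleteSpace E] [CompleteSpace F]
    (D : E →L[ℂ] E) (C : F →L[ℂ] E) (A : F →L[ℂ] F) (e : E) (f : F) :
    (⟪blk D C (adjoint C) A (mk2 e f), mk2 e f⟫_ℂ).re
      = (⟪D e, e⟫_ℂ).re + (⟪A f, f⟫_ℂ).re + 2 * (⟪adjoint C e, f⟫_ℂ).re := by
  have hC : (⟪C f, e⟫_ℂ).re = (⟪adjoint C e, f⟫_ℂ).re := by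
    rw [← adjoint_inner_right, ← inner_conj_symm, conj_re]
  simp only [blk_mk2, inner_mk2, inner_add_left, add_re, hC]
  ring

end Block

section Transfer

variable [CompleteSpace E] [CompleteSpace F]

def transferFn (D : E →L[ℂ] E) (C : F →L[ℂ] E) (A : F →L[ℂ] F) (x : ℝ) : E →L[ℂ] E :=
  D + (x : ℂ) • (C ∘L Ring.inverse (1 - (x : ℂ) • A) ∘L adjoint C)

theorem transferFn_neg (D : E →L[ℂ] E) (C : F →L[ℂ] E) (A : F →L[ℂ] F) (x : ℝ) :
    transferFn (-D) (-C) (-A) (-x) = -transferFn D C A x := by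
  simp only [transferFn, ofReal_neg, neg_smul, smul_neg, neg_neg, map_neg, comp_neg, neg_comp,
    neg_add]

theorem re_inner_transferFn_apply (D : E →L[ℂ] E) (C : F →L[ℂ] E) (A : F →L[ℂ] F) (x : ℝ)
    (e : E) :
    (⟪transferFn D C A x e, e⟫_ℂ).re = (⟪D e, e⟫_ℂ).re
      + x * (⟪Ring.inverse (1 - (x : ℂ) • A) (adjoint C e), adjoint C e⟫_ℂ).re := by
  rw [transferFn, add_apply, inner_add_left, add_re, smul_apply, inner_smul_left, conj_ofReal,
    re_ofReal_mul, comp_apply, comp_apply, ← adjoint_inner_right C]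

theorem re_inner_transferFn_eq_ciInf {D : E →L[ℂ] E} {C : F →L[ℂ] E} {A : F →L[ℂ] F}
    (hA : (A : F →ₗ[ℂ] F).IsSymmetric) (hA₁ : ‖A‖ ≤ 1) {x : ℝ} (hx : x ∈ Set.Ioo (-1) 0)
    (e : E) :
    (⟪transferFn D C A x e, e⟫_ℂ).re =
      (⨅ f : F, ((⟪(1 + blk D C (adjoint C) A) (mk2 e f), mk2 e f⟫_ℂ).re
        + (-(1 + x) / x) * ‖f‖ ^ 2)) - ‖e‖ ^ 2 := by
  obtain ⟨hx₁, hx₀⟩ := hx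
  set ε := -(1 + x) / x with hε_def
  have hε : 0 ≤ ε := (div_pos_of_neg_of_neg (by linarith) hx₀).le
  set g := adjoint C e
  set R := Ring.inverse (1 - (x : ℂ) • A)
  have hR : (1 - (x : ℂ) • A) (R g) = g := by
    have hxA : ‖(x : ℂ) • A‖ < 1 := by
      rw [norm_smul, norm_real, Real.norm_eq_abs]
      exact (mul_le_of_le_one_right (abs_nonneg x) hA₁).trans_lt (abs_lt.2 ⟨hx₁, by linarith⟩)
    have h := DFunLike.congr_fun (Ring.mul_inverse_cancel _ (isUnit_one_sub_of_norm_lt_one hxA)) g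
    rwa [mul_apply_eq_comp, one_apply_eq_self] at h
  set S : F →L[ℂ] F := 1 + A + (ε : ℂ) • 1
  have hS : S.IsPositive := (isPositive_one_add_of_norm_le_one hA hA₁).add
    (isPositive_one.smul_of_nonneg (by exact_mod_cast hε))
  -- `1 + ε = -1 / x`, so `S = -(1 - x A) / x`
  have hSR : S ((x : ℂ) • R g) = -g := by
    have hεx : (ε : ℂ) * x = -(1 + x) := by
      rw [← ofReal_mul, hε_def, div_mul_cancel₀ _ hx₀.ne]; push_cast; ring
    simp only [S, add_apply, sub_apply, one_apply_eq_self, smul_apply, map_smul] at hR ⊢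
    linear_combination (norm := module) hεx • R g - hR
  have hexpand : ∀ f : F, (⟪(1 + blk D C (adjoint C) A) (mk2 e f), mk2 e f⟫_ℂ).re + ε * ‖f‖ ^ 2
      = ‖e‖ ^ 2 + (⟪D e, e⟫_ℂ).re + ((⟪S f, f⟫_ℂ).re + 2 * (⟪g, f⟫_ℂ).re) := by
    intro f
    simp only [S, add_apply, one_apply_eq_self, inner_add_left, add_re, re_inner_blk_adjoint_mk2,
      inner_mk2, re_inner_self_eq_norm_sq, smul_apply, inner_smul_left, conj_ofReal, re_ofReal_mul]
    ring
  have hmin : ∀ f : F, (⟪g, (x : ℂ) • R g⟫_ℂ).re ≤ (⟪S f, f⟫_ℂ).re + 2 * (⟪g, f⟫_ℂ).re :=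
    fun f => by simpa only [RCLike.re_to_complex] using hS.re_inner_le_of_apply_eq_neg hSR f
  have hval : (⟪S ((x : ℂ) • R g), (x : ℂ) • R g⟫_ℂ).re + 2 * (⟪g, (x : ℂ) • R g⟫_ℂ).re
      = (⟪g, (x : ℂ) • R g⟫_ℂ).re := by
    rw [hSR, inner_neg_left, neg_re]; ring
  have hinf : ⨅ f : F, ((⟪(1 + blk D C (adjoint C) A) (mk2 e f), mk2 e f⟫_ℂ).re + ε * ‖f‖ ^ 2)
      = ‖e‖ ^ 2 + (⟪D e, e⟫_ℂ).re + (⟪g, (x : ℂ) • R g⟫_ℂ).re := by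
    simp_rw [hexpand]
    have hle : ∀ f : F, ‖e‖ ^ 2 + (⟪D e, e⟫_ℂ).re + (⟪g, (x : ℂ) • R g⟫_ℂ).re
        ≤ ‖e‖ ^ 2 + (⟪D e, e⟫_ℂ).re + ((⟪S f, f⟫_ℂ).re + 2 * (⟪g, f⟫_ℂ).re) :=
      fun f => by linarith [hmin f]
    exact le_antisymm ((ciInf_le ⟨_, Set.forall_mem_range.2 hle⟩ _).trans_eq (by rw [hval]))
      (le_ciInf hle)
  rw [re_inner_transferFn_apply, hinf, inner_smul_right, re_ofReal_mul,
    ← inner_conj_symm g, conj_re]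
  ring

theorem tendsto_re_inner_transferFn_nhdsGT_neg_one {D : E →L[ℂ] E} {C : F →L[ℂ] E}
    {A : F →L[ℂ] F} (hU : IsSelfAdjoint (blk D C (adjoint C) A))
    (hU₁ : ‖blk D C (adjoint C) A‖ ≤ 1) (e : E) :
    Tendsto (fun x : ℝ => (⟪transferFn D C A x e, e⟫_ℂ).re) (𝓝[>] (-1))
      (𝓝 ((⨅ f : F, (⟪(1 + blk D C (adjoint C) A) (mk2 e f), mk2 e f⟫_ℂ).re) - ‖e‖ ^ 2)) := by
  have hQ : BddBelow (Set.range fun f : F =>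
      (⟪(1 + blk D C (adjoint C) A) (mk2 e f), mk2 e f⟫_ℂ).re) :=
    ⟨0, Set.forall_mem_range.2 fun f =>
      (isPositive_one_add_of_norm_le_one hU.isSymmetric hU₁).re_inner_nonneg_left _⟩
  have hε : Tendsto (fun x : ℝ => -(1 + x) / x) (𝓝[>] (-1)) (𝓝[>] 0) := by
    refine tendsto_nhdsWithin_iff.2 ⟨?_, ?_⟩
    · have : ContinuousAt (fun x : ℝ => -(1 + x) / x) (-1) := by fun_prop (disch := norm_num)
      simpa using this.tendsto.mono_left nhdsWithin_le_nhds
    · filter_upwards [Ioo_mem_nhdsGT (show (-1 : ℝ) < 0 by norm_num)] with x hx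
      exact div_pos_of_neg_of_neg (by linarith [hx.1]) hx.2
  refine ((tendsto_ciInf_add_mul_nhdsGT hQ fun f => sq_nonneg ‖f‖).comp hε
    |>.sub_const _).congr' ?_
  filter_upwards [Ioo_mem_nhdsGT (show (-1 : ℝ) < 0 by norm_num)] with x hx
  exact (re_inner_transferFn_eq_ciInf (isSymmetric_of_isSelfAdjoint_blk hU)
    ((norm_le_norm_blk _ _ _ _).trans hU₁) hx e).symm

end Transfer

/-- For a selfadjoint contraction `U = [[D, C], [C*, A]]` on `N ⊕ H` with transfer function
`Θ(x) = D + x·C (I − xA)⁻¹ C*`, the quadratic form `⟪Θ(x)f, f⟫` converges, as `x → −1⁺`,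
to `⟪(I + U)_N f, f⟫ − ‖f‖²` and, as `x → 1⁻`, to `‖f‖² − ⟪(I − U)_N f, f⟫`, where the
shorted operators are given by infima of quadratic forms. -/
theorem stmt_13 {N H : Type*} [NormedAddCommGroup N] [InnerProductSpace ℂ N] [CompleteSpace N]
    [NormedAddCommGroup H] [InnerProductSpace ℂ H] [CompleteSpace H]
    (D : N →L[ℂ] N) (C : H →L[ℂ] N) (A : H →L[ℂ] H)
    (hUsa : IsSelfAdjoint (blk D C (adjoint C) A))
    (hUc : ‖blk D C (adjoint C) A‖ ≤ 1) (f : N) :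
    Tendsto
        (fun x : ℝ =>
          (⟪(D + (x : ℂ) • (C ∘L Ring.inverse (1 - (x : ℂ) • A) ∘L adjoint C)) f, f⟫_ℂ).re)
        (nhdsWithin (-1 : ℝ) (Set.Ioi (-1 : ℝ)))
        (nhds ((⨅ h : H,
          (⟪(1 + blk D C (adjoint C) A) (mk2 f h), mk2 f h⟫_ℂ).re) - ‖f‖ ^ 2)) ∧
      Tendsto
        (fun x : ℝ =>
          (⟪(D + (x : ℂ) • (C ∘L Ring.inverse (1 - (x : ℂ) • A) ∘L adjoint C)) f, f⟫_ℂ).re)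
        (nhdsWithin (1 : ℝ) (Set.Iio (1 : ℝ)))
        (nhds (‖f‖ ^ 2 - ⨅ h : H,
          (⟪(1 - blk D C (adjoint C) A) (mk2 f h), mk2 f h⟫_ℂ).re)) := by
  refine ⟨tendsto_re_inner_transferFn_nhdsGT_neg_one hUsa hUc f, ?_⟩
  have hneg : blk (-D) (-C) (adjoint (-C)) (-A) = -blk D C (adjoint C) A := by
    rw [map_neg, blk_neg]
  have hflip := (tendsto_re_inner_transferFn_nhdsGT_neg_one (hneg ▸ hUsa.neg)
    (by rwa [hneg, norm_neg]) f).comp tendsto_neg_nhdsLT |>.neg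
  convert hflip using 2 with x
  · simp only [Function.comp_apply, transferFn_neg, neg_apply, inner_neg_left, neg_re, neg_neg]
    rfl
  · rw [hneg, ← sub_eq_add_neg]
    ring
end
end

section
/- Assume the exit-space setup, let X = [[X₁₁, X₁₂], [X₁₂*, X₂₂]] be a selfadjoint contraction on 𝔇_{K0*} ⊕ 𝓗, and assume (as is automatic) that B̃_X is a contraction on H ⊕ 𝓗. Let C̃ be the compression of B̃_X to H (the upper-left 2×2 block [[B₀, D_{B₀}K₀*], [K₀D_{B₀}, −K₀B₀K₀* + D_{K0*}X₁₁D_{K0*}]]), and let M̃ : 𝓗 → H be the block column (0, D_{K0*}X₁₂). For z ∈ ℂ \ ((−∞, −1] ∪ [1, +∞)) define Θ(z) = X₂₂ + z·M̃* (I_H − z·C̃)^{-1} M̃ on 𝓗. Then for every such z the operator z·Θ(z) − I_𝓗 is boundedly invertible and P_𝓗 (z·B̃_X − I)^{-1}↾𝓗 = (z·Θ(z) − I_𝓗)^{-1}. -/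
/-!
Write `z • B̃_X - 1` as the block operator `[[z • C̃ - 1, z • M̃], [z • M̃*, z • X₂₂ - 1]]` on
`H ⊕ 𝓗`. Both `B̃_X` and its compression `C̃` are selfadjoint contractions, so their spectra lie
in `[-1, 1]` and `z • B̃_X - 1`, `z • C̃ - 1` are invertible off `(-∞, -1] ∪ [1, ∞)`. The
`𝓗`-corner of the inverse of a block operator with invertible upper-left block is the inverse of
its Schur complement, and here the Schur complement is `z • Θ(z) - 1`.
-/

open ContinuousLinearMap Complex Filter
open scoped InnerProductSpace Topology

set_option synthInstance.maxHeartbeats 1000000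
set_option maxHeartbeats 1000000

noncomputable section

variable {E F : Type*} [NormedAddCommGroup E] [InnerProductSpace ℂ E]
  [NormedAddCommGroup F] [InnerProductSpace ℂ F]

section BlockOperator

variable (A : E →L[ℂ] E) (B : F →L[ℂ] E) (C : E →L[ℂ] F) (D : F →L[ℂ] F)

@[simp] lemma snd2_comp_inr2 : (snd2 : WithLp 2 (E × F) →L[ℂ] F) ∘L inr2 = 1 := by
  ext; simp [snd2, inr2]

@[simp] lemma fst2_comp_inr2 : (fst2 : WithLp 2 (E × F) →L[ℂ] E) ∘L inr2 = 0 := by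
  ext; simp [fst2, inr2]

@[simp] lemma snd2_comp_inl2 : (snd2 : WithLp 2 (E × F) →L[ℂ] F) ∘L inl2 = 0 := by
  ext; simp [snd2, inl2]

lemma fst2_comp_blk : fst2 ∘L blk A B C D = A ∘L fst2 + B ∘L snd2 := by
  ext; simp [fst2, snd2, blk]

lemma snd2_comp_blk : snd2 ∘L blk A B C D = C ∘L fst2 + D ∘L snd2 := by
  ext; simp [fst2, snd2, blk]

lemma blk_comp_inl2 : blk A B C D ∘L inl2 = inl2 ∘L A + inr2 ∘L C := by
  ext x
  simp [blk, inl2, inr2, ← WithLp.toLp_add]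

lemma blk_comp_inr2 : blk A B C D ∘L inr2 = inl2 ∘L B + inr2 ∘L D := by
  ext x
  simp [blk, inl2, inr2, ← WithLp.toLp_add]

@[simp] lemma fst2_comp_blk_comp_inl2 : fst2 ∘L blk A B C D ∘L inl2 = A := by
  ext; simp [fst2, inl2, blk]

@[simp] lemma fst2_comp_blk_comp_inr2 : fst2 ∘L blk A B C D ∘L inr2 = B := by
  ext; simp [fst2, inr2, blk]

@[simp] lemma snd2_comp_blk_comp_inl2 : snd2 ∘L blk A B C D ∘L inl2 = C := by
  ext; simp [snd2, inl2, blk]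

@[simp] lemma snd2_comp_blk_comp_inr2 : snd2 ∘L blk A B C D ∘L inr2 = D := by
  ext; simp [snd2, inr2, blk]

lemma blk_inj {A' : E →L[ℂ] E} {B' : F →L[ℂ] E} {C' : E →L[ℂ] F} {D' : F →L[ℂ] F} :
    blk A B C D = blk A' B' C' D' ↔ A = A' ∧ B = B' ∧ C = C' ∧ D = D' := by
  refine ⟨fun h => ⟨?_, ?_, ?_, ?_⟩, fun ⟨hA, hB, hC, hD⟩ => hA ▸ hB ▸ hC ▸ hD ▸ rfl⟩
  · simpa using congrArg (fun T => fst2 ∘L T ∘L inl2) h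
  · simpa using congrArg (fun T => fst2 ∘L T ∘L inr2) h
  · simpa using congrArg (fun T => snd2 ∘L T ∘L inl2) h
  · simpa using congrArg (fun T => snd2 ∘L T ∘L inr2) h

lemma smul_blk_sub_one (z : ℂ) :
    z • blk A B C D - 1 = blk (z • A - 1) (z • B) (z • C) (z • D - 1) := by
  ext x : 1
  apply WithLp.ofLp_injective 2
  ext <;> simp [blk, sub_add_eq_add_sub, add_sub_assoc]

lemma norm_inl2_le : ‖(inl2 : E →L[ℂ] WithLp 2 (E × F))‖ ≤ 1 :=
  opNorm_le_bound _ zero_le_one fun x => by simp [inl2, WithLp.norm_toLp_fst]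

end BlockOperator

section Schur

variable {P : E →L[ℂ] E} {Q : F →L[ℂ] E} {R : E →L[ℂ] F} {S : F →L[ℂ] F}

lemma blk_comp_schurColumn (hP : IsUnit P) :
    blk P Q R S ∘L (inl2 ∘L (-(Ring.inverse P ∘L Q)) + inr2) =
      inr2 ∘L (S - R ∘L Ring.inverse P ∘L Q) := by
  have hPP : P ∘L Ring.inverse P = 1 := Ring.mul_inverse_cancel P hP
  rw [comp_add, ← comp_assoc, blk_comp_inl2, blk_comp_inr2, add_comp, comp_assoc, comp_neg,
    ← comp_assoc P, hPP, one_def, id_comp]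
  simp only [comp_neg, comp_sub, comp_assoc]
  abel

theorem snd2_inverse_blk_inr2_inverts_schur (hP : IsUnit P) (hM : IsUnit (blk P Q R S)) :
    (snd2 ∘L Ring.inverse (blk P Q R S) ∘L inr2) ∘L (S - R ∘L Ring.inverse P ∘L Q) = 1 ∧
      (S - R ∘L Ring.inverse P ∘L Q) ∘L (snd2 ∘L Ring.inverse (blk P Q R S) ∘L inr2) = 1 := by
  have hMM : Ring.inverse (blk P Q R S) ∘L blk P Q R S = 1 := Ring.inverse_mul_cancel _ hM
  have hPP : Ring.inverse P ∘L P = 1 := Ring.inverse_mul_cancel P hP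
  constructor
  · calc (snd2 ∘L Ring.inverse (blk P Q R S) ∘L inr2) ∘L (S - R ∘L Ring.inverse P ∘L Q)
        = snd2 ∘L (Ring.inverse (blk P Q R S) ∘L blk P Q R S) ∘L
            (inl2 ∘L (-(Ring.inverse P ∘L Q)) + inr2) := by
          rw [comp_assoc _ (blk P Q R S), blk_comp_schurColumn hP]; simp only [comp_assoc]
      _ = 1 := by simp [hMM, one_def, comp_add, ← comp_assoc]
  · set W := Ring.inverse (blk P Q R S) ∘L inr2
    have hMW : blk P Q R S ∘L W = inr2 := by
      have h : blk P Q R S ∘L Ring.inverse (blk P Q R S) = 1 := Ring.mul_inverse_cancel _ hM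
      rw [← comp_assoc, h, one_def, id_comp]
    have hfst : P ∘L fst2 ∘L W + Q ∘L snd2 ∘L W = 0 := by
      have h := congrArg (fst2 ∘L ·) hMW
      simpa only [← comp_assoc, fst2_comp_blk, add_comp, fst2_comp_inr2] using h
    have hsnd : R ∘L fst2 ∘L W + S ∘L snd2 ∘L W = 1 := by
      have h := congrArg (snd2 ∘L ·) hMW
      simpa only [← comp_assoc, snd2_comp_blk, add_comp, snd2_comp_inr2] using h
    have hW1 : fst2 ∘L W = -(Ring.inverse P ∘L Q ∘L snd2 ∘L W) := by
      calc fst2 ∘L W = (Ring.inverse P ∘L P) ∘L fst2 ∘L W := by rw [hPP, one_def, id_comp]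
        _ = -(Ring.inverse P ∘L Q ∘L snd2 ∘L W) := by
          rw [comp_assoc, eq_neg_of_add_eq_zero_left hfst, comp_neg]
    rw [← hsnd, hW1, sub_comp, comp_neg]
    simp only [comp_assoc]
    abel

end Schur

section Adjoint

variable [CompleteSpace E] [CompleteSpace F]
variable (A : E →L[ℂ] E) (B : F →L[ℂ] E) (C : E →L[ℂ] F) (D : F →L[ℂ] F)

lemma adjoint_inl2 : adjoint (inl2 : E →L[ℂ] WithLp 2 (E × F)) = fst2 := by
  refine ((eq_adjoint_iff _ _).mpr fun x y => ?_).symm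
  simp [fst2, inl2, WithLp.prod_inner_apply]

lemma adjoint_inr2 : adjoint (inr2 : F →L[ℂ] WithLp 2 (E × F)) = snd2 := by
  refine ((eq_adjoint_iff _ _).mpr fun x y => ?_).symm
  simp [snd2, inr2, WithLp.prod_inner_apply]

lemma adjoint_blk :
    adjoint (blk A B C D) = blk (adjoint A) (adjoint C) (adjoint B) (adjoint D) := by
  refine ((eq_adjoint_iff _ _).mpr fun x y => ?_).symm
  simp [blk, WithLp.prod_inner_apply, inner_add_left, inner_add_right, adjoint_inner_left]
  ring

variable {A B C D} in
lemma isSelfAdjoint_blk_iff :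
    IsSelfAdjoint (blk A B C D) ↔ IsSelfAdjoint A ∧ adjoint B = C ∧ IsSelfAdjoint D := by
  simp only [isSelfAdjoint_iff', adjoint_blk, blk_inj]
  constructor
  · rintro ⟨hA, -, hBC, hD⟩
    exact ⟨hA, hBC, hD⟩
  · rintro ⟨hA, rfl, hD⟩
    exact ⟨hA, adjoint_adjoint B, rfl, hD⟩

lemma norm_fst2_comp_comp_inl2_le (T : WithLp 2 (E × F) →L[ℂ] WithLp 2 (E × F)) :
    ‖fst2 ∘L T ∘L inl2‖ ≤ ‖T‖ := by
  have hinl : ‖(inl2 : E →L[ℂ] WithLp 2 (E × F))‖ ≤ 1 := norm_inl2_le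
  have hfst : ‖(fst2 : WithLp 2 (E × F) →L[ℂ] E)‖ ≤ 1 := by
    rwa [← adjoint_inl2, LinearIsometryEquiv.norm_map]
  calc ‖fst2 ∘L T ∘L inl2‖ ≤ ‖(fst2 : WithLp 2 (E × F) →L[ℂ] E)‖ * (‖T‖ * ‖inl2‖) :=
        (opNorm_comp_le _ _).trans <|
          mul_le_mul_of_nonneg_left (opNorm_comp_le _ _) (norm_nonneg _)
    _ ≤ 1 * (‖T‖ * 1) := by gcongr
    _ = ‖T‖ := by ring

end Adjoint

lemma Ring.inverse_neg {R : Type*} [MonoidWithZero R] [HasDistribNeg R] (x : R) :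
    Ring.inverse (-x) = -Ring.inverse x := by
  by_cases hx : IsUnit x
  · obtain ⟨u, rfl⟩ := hx
    rw [← Units.val_neg, Ring.inverse_unit, Ring.inverse_unit, inv_neg, Units.val_neg]
  · rw [Ring.inverse_non_unit x hx, Ring.inverse_non_unit _ (by rwa [IsUnit.neg_iff]), neg_zero]

lemma IsSelfAdjoint.isUnit_one_sub_smul {A : Type*} [CStarAlgebra A] {a : A}
    (ha : IsSelfAdjoint a) (hna : ‖a‖ ≤ 1) {z : ℂ} (hz : ¬(z.im = 0 ∧ 1 ≤ |z.re|)) :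
    IsUnit (1 - z • a) := by
  rcases subsingleton_or_nontrivial A with hA | hA
  · exact isUnit_of_subsingleton _
  rcases eq_or_ne z 0 with rfl | hz0
  · simp
  have hmem : z⁻¹ ∉ spectrum ℂ a := by
    intro h
    set r := (z⁻¹).re
    have hre : z⁻¹ = (r : ℂ) := ha.mem_spectrum_eq_re h
    have hr : 0 < |r| := by
      rw [abs_pos]; rintro hr0; simp [hr0, hz0] at hre
    have hr1 : |r| ≤ 1 := by
      simpa [hre] using (spectrum.norm_le_norm_of_mem h).trans hna
    refine hz ⟨?_, ?_⟩
    · rw [← inv_inv z, hre]; simp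
    · rw [← inv_inv z, hre, ← ofReal_inv, ofReal_re, abs_inv]
      exact one_le_inv₀ hr |>.mpr hr1
  have hunit : IsUnit (algebraMap ℂ A z * (algebraMap ℂ A z⁻¹ - a)) :=
    (hz0.isUnit.map _).mul (spectrum.notMem_iff.mp hmem)
  rwa [mul_sub, ← map_mul, mul_inv_cancel₀ hz0, map_one, ← Algebra.smul_def] at hunit

section Resolvent

variable [CompleteSpace E] [CompleteSpace F]

def transferFunction (A : E →L[ℂ] E) (B : F →L[ℂ] E) (D : F →L[ℂ] F) (z : ℂ) : F →L[ℂ] F :=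
  D + z • (adjoint B ∘L Ring.inverse (1 - z • A) ∘L B)

theorem compression_resolvent_inverts_transferFunction {A : E →L[ℂ] E} {B : F →L[ℂ] E}
    {D : F →L[ℂ] F} (hA : IsSelfAdjoint A) (hD : IsSelfAdjoint D)
    (hn : ‖blk A B (adjoint B) D‖ ≤ 1) {z : ℂ} (hz : ¬(z.im = 0 ∧ 1 ≤ |z.re|)) :
    (snd2 ∘L Ring.inverse (z • blk A B (adjoint B) D - 1) ∘L inr2) ∘L
        (z • transferFunction A B D z - 1) = 1 ∧
      (z • transferFunction A B D z - 1) ∘L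
        (snd2 ∘L Ring.inverse (z • blk A B (adjoint B) D - 1) ∘L inr2) = 1 := by
  have hsa : IsSelfAdjoint (blk A B (adjoint B) D) := isSelfAdjoint_blk_iff.mpr ⟨hA, rfl, hD⟩
  have hAn : ‖A‖ ≤ 1 := by
    simpa using (norm_fst2_comp_comp_inl2_le _).trans hn
  have hP : IsUnit (z • A - 1) := by
    simpa using (hA.isUnit_one_sub_smul hAn hz).neg
  have hM : IsUnit (z • blk A B (adjoint B) D - 1) := by
    simpa using (hsa.isUnit_one_sub_smul hn hz).neg
  have hinv : Ring.inverse (z • A - 1) = -Ring.inverse (1 - z • A) := by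
    rw [← neg_sub, Ring.inverse_neg (1 - z • A)]
  have hΘ : z • transferFunction A B D z - 1 =
      (z • D - 1) - (z • adjoint B) ∘L Ring.inverse (z • A - 1) ∘L (z • B) := by
    simp only [transferFunction, hinv, comp_neg, neg_comp, smul_comp, comp_smul, smul_add,
      smul_smul]
    module
  rw [smul_blk_sub_one] at hM ⊢
  rw [hΘ]
  exact snd2_inverse_blk_inr2_inverts_schur hP hM

end Resolvent

theorem stmt_14_general {H₀ N 𝓗 : Type*}
    [NormedAddCommGroup H₀] [InnerProductSpace ℂ H₀] [CompleteSpace H₀]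
    [NormedAddCommGroup N] [InnerProductSpace ℂ N] [CompleteSpace N]
    [NormedAddCommGroup 𝓗] [InnerProductSpace ℂ 𝓗] [CompleteSpace 𝓗]
    (B₀ : H₀ →L[ℂ] H₀) (hB₀sa : IsSelfAdjoint B₀)
    (K₀ : H₀ →L[ℂ] N) :
    let DB := CFC.sqrt (1 - B₀ ^ 2)
    let DK := CFC.sqrt (1 - K₀ ∘L adjoint K₀)
    let 𝔇 := (LinearMap.range (DK : N →ₗ[ℂ] N)).topologicalClosure
    ∀ (X11 : ↥𝔇 →L[ℂ] ↥𝔇) (X12 : 𝓗 →L[ℂ] ↥𝔇) (X22 : 𝓗 →L[ℂ] 𝓗),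
      IsSelfAdjoint (blk X11 X12 (adjoint X12) X22) →
      ‖blk X11 X12 (adjoint X12) X22‖ ≤ 1 →
      let Ct : WithLp 2 (H₀ × N) →L[ℂ] WithLp 2 (H₀ × N) :=
        blk B₀ (DB ∘L adjoint K₀) (K₀ ∘L DB)
          (-(K₀ ∘L B₀ ∘L adjoint K₀) +
            DK ∘L 𝔇.subtypeL ∘L X11 ∘L 𝔇.orthogonalProjectionOnto ∘L DK)
      let Mt : 𝓗 →L[ℂ] WithLp 2 (H₀ × N) := inr2 ∘L DK ∘L 𝔇.subtypeL ∘L X12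
      let BX := blk Ct Mt (adjoint X12 ∘L 𝔇.orthogonalProjectionOnto ∘L DK ∘L snd2) X22
      ‖BX‖ ≤ 1 →
      ∀ z : ℂ, ¬(z.im = 0 ∧ 1 ≤ |z.re|) →
        let Θ : 𝓗 →L[ℂ] 𝓗 :=
          X22 + z • (adjoint Mt ∘L Ring.inverse (1 - z • Ct) ∘L Mt)
        (snd2 ∘L Ring.inverse (z • BX - 1) ∘L inr2) ∘L (z • Θ - 1) = 1 ∧
          (z • Θ - 1) ∘L (snd2 ∘L Ring.inverse (z • BX - 1) ∘L inr2) = 1 := by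
  intro DB DK 𝔇 X11 X12 X22 hXsa _ Ct Mt BX hBXn z hz Θ
  obtain ⟨hX11, -, hX22⟩ := isSelfAdjoint_blk_iff.mp hXsa
  have hDB : IsSelfAdjoint DB := .of_nonneg (CFC.sqrt_nonneg _)
  have hDK : IsSelfAdjoint DK := .of_nonneg (CFC.sqrt_nonneg _)
  have hDKι : adjoint (DK ∘L 𝔇.subtypeL) = 𝔇.orthogonalProjectionOnto ∘L DK := by
    rw [adjoint_comp, Submodule.adjoint_subtypeL, hDK.adjoint_eq]
  have hCt : IsSelfAdjoint Ct := by
    refine isSelfAdjoint_blk_iff.mpr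
      ⟨hB₀sa, by rw [adjoint_comp, adjoint_adjoint, hDB.adjoint_eq], ?_⟩
    have h := (hB₀sa.conj_adjoint K₀).neg.add (hX11.conj_adjoint (DK ∘L 𝔇.subtypeL))
    rwa [hDKι] at h
  have hBX : BX = blk Ct Mt (adjoint Mt) X22 := by
    have hMt : adjoint Mt = adjoint X12 ∘L 𝔇.orthogonalProjectionOnto ∘L DK ∘L snd2 := by
      rw [show Mt = inr2 ∘L (DK ∘L 𝔇.subtypeL) ∘L X12 from rfl, adjoint_comp, adjoint_comp,
        hDKι, adjoint_inr2]
      rfl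
    rw [hMt]
  rw [hBX] at hBXn ⊢
  exact compression_resolvent_inverts_transferFunction hCt hX22 hBXn hz

/-- Compressed resolvent to the exit space: for a selfadjoint contractive exit-space
extension `B̃_X` with upper-left compression `C̃` and column `M̃ = (0, D_{K₀*}X₁₂)`, the
transfer function `Θ(z) = X₂₂ + z·M̃* (I − z·C̃)⁻¹ M̃` satisfies
`P_𝓗 (z·B̃_X − I)⁻¹ ↾ 𝓗 = (z·Θ(z) − I)⁻¹` for all `z ∈ ℂ \ ((−∞,−1] ∪ [1,∞))`. -/
theorem stmt_14 {H₀ N 𝓗 : Type*}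
    [NormedAddCommGroup H₀] [InnerProductSpace ℂ H₀] [CompleteSpace H₀]
    [TopologicalSpace.SeparableSpace H₀]
    [NormedAddCommGroup N] [InnerProductSpace ℂ N] [CompleteSpace N]
    [TopologicalSpace.SeparableSpace N]
    [NormedAddCommGroup 𝓗] [InnerProductSpace ℂ 𝓗] [CompleteSpace 𝓗]
    [TopologicalSpace.SeparableSpace 𝓗]
    (B₀ : H₀ →L[ℂ] H₀) (hB₀sa : IsSelfAdjoint B₀) (hB₀c : ‖B₀‖ ≤ 1)
    (K₀ : H₀ →L[ℂ] N) (hK₀c : ‖K₀‖ ≤ 1)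
    (hker : LinearMap.ker ((CFC.sqrt (1 - B₀ ^ 2) : H₀ →L[ℂ] H₀) : H₀ →ₗ[ℂ] H₀) ≤ LinearMap.ker (K₀ : H₀ →ₗ[ℂ] N)) :
    let DB := CFC.sqrt (1 - B₀ ^ 2)
    let DK := CFC.sqrt (1 - K₀ ∘L adjoint K₀)
    let 𝔇 := (LinearMap.range (DK : N →ₗ[ℂ] N)).topologicalClosure
    ∀ (X11 : ↥𝔇 →L[ℂ] ↥𝔇) (X12 : 𝓗 →L[ℂ] ↥𝔇) (X22 : 𝓗 →L[ℂ] 𝓗),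
      IsSelfAdjoint (blk X11 X12 (adjoint X12) X22) →
      ‖blk X11 X12 (adjoint X12) X22‖ ≤ 1 →
      let Ct : WithLp 2 (H₀ × N) →L[ℂ] WithLp 2 (H₀ × N) :=
        blk B₀ (DB ∘L adjoint K₀) (K₀ ∘L DB)
          (-(K₀ ∘L B₀ ∘L adjoint K₀) +
            DK ∘L 𝔇.subtypeL ∘L X11 ∘L 𝔇.orthogonalProjectionOnto ∘L DK)
      let Mt : 𝓗 →L[ℂ] WithLp 2 (H₀ × N) := inr2 ∘L DK ∘L 𝔇.subtypeL ∘L X12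
      let BX := blk Ct Mt (adjoint X12 ∘L 𝔇.orthogonalProjectionOnto ∘L DK ∘L snd2) X22
      ‖BX‖ ≤ 1 →
      ∀ z : ℂ, ¬(z.im = 0 ∧ 1 ≤ |z.re|) →
        let Θ : 𝓗 →L[ℂ] 𝓗 :=
          X22 + z • (adjoint Mt ∘L Ring.inverse (1 - z • Ct) ∘L Mt)
        (snd2 ∘L Ring.inverse (z • BX - 1) ∘L inr2) ∘L (z • Θ - 1) = 1 ∧
          (z • Θ - 1) ∘L (snd2 ∘L Ring.inverse (z • BX - 1) ∘L inr2) = 1 :=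
  stmt_14_general B₀ hB₀sa K₀
end
end
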